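/- If sequences {α(t)} and {γ(t)} satisfy: (i) lim_{t→∞}(γ̄_i(t) − ū_i(t)) = 0 for all i, (ii) γ_i(t) ∈ [0, u_i^max] for all i and t, and φ is concave and M-Lipschitz on the box, then liminf_{t→∞} φ(ū(t)) ≥ liminf_{t→∞} (1/t)·∑_{τ=0}^{t−1} φ(γ(τ)). -/

import Mathlib

/-!
By Jensen's inequality the time average of `φ (γ τ)` is at most `φ (γ̄ t)`, and since `φ` is
Lipschitz and `γ̄ t - ū t → 0`, also `φ (γ̄ t) - φ (ū t) → 0`. Comparing liminfs needs these real
sequences to be bounded, which holds because `φ` is Lipschitz on a bounded box.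
-/

open Filter Finset Topology

section TimeAverage

variable {E : Type*} [AddCommGroup E] [Module ℝ E]

noncomputable def timeAverage (x : ℕ → E) (t : ℕ) : E :=
  (t : ℝ)⁻¹ • ∑ τ ∈ range t, x τ

theorem timeAverage_eq_centerMass (x : ℕ → E) (t : ℕ) :
    timeAverage x t = (range t).centerMass (fun _ => (1 : ℝ)) x := by
  simp [timeAverage, centerMass]

theorem Convex.timeAverage_mem {S : Set E} (hS : Convex ℝ S) {x : ℕ → E} (hx : ∀ τ, x τ ∈ S)
    {t : ℕ} (ht : t ≠ 0) : timeAverage x t ∈ S := by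
  rw [timeAverage_eq_centerMass]
  exact hS.centerMass_mem (by simp) (by simpa using Nat.pos_of_ne_zero ht) (fun τ _ => hx τ)

theorem ConcaveOn.timeAverage_le_map_timeAverage {S : Set E} {φ : E → ℝ} (hφ : ConcaveOn ℝ S φ)
    {x : ℕ → E} (hx : ∀ τ, x τ ∈ S) {t : ℕ} (ht : t ≠ 0) :
    timeAverage (φ ∘ x) t ≤ φ (timeAverage x t) := by
  rw [timeAverage_eq_centerMass, timeAverage_eq_centerMass]
  exact hφ.le_map_centerMass (by simp) (by simpa using Nat.pos_of_ne_zero ht) (fun τ _ => hx τ)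

end TimeAverage

theorem LipschitzOnWith.isBounded_image {α β : Type*} [PseudoMetricSpace α] [PseudoMetricSpace β]
    {K : NNReal} {f : α → β} {s : Set α} (hf : LipschitzOnWith K f s)
    (hs : Bornology.IsBounded s) : Bornology.IsBounded (f '' s) := by
  obtain ⟨C, hC⟩ := Metric.isBounded_iff.1 hs
  refine Metric.isBounded_iff.2 ⟨K * C, ?_⟩
  rintro _ ⟨x, hx, rfl⟩ _ ⟨y, hy, rfl⟩
  exact (hf.dist_le_mul x hx y hy).trans (by gcongr; exact hC hx hy)

theorem LipschitzOnWith.tendsto_sub_map {α E F : Type*} [SeminormedAddCommGroup E]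
    [SeminormedAddCommGroup F] {K : NNReal} {f : E → F} {s : Set E} (hf : LipschitzOnWith K f s)
    {l : Filter α} {a b : α → E} (ha : ∀ᶠ i in l, a i ∈ s) (hb : ∀ᶠ i in l, b i ∈ s)
    (hab : Tendsto (fun i => a i - b i) l (𝓝 0)) :
    Tendsto (fun i => f (a i) - f (b i)) l (𝓝 0) := by
  refine squeeze_zero_norm' ?_ (by simpa using (tendsto_norm_zero.comp hab).const_mul (K : ℝ))
  filter_upwards [ha, hb] with i hai hbi
  simpa [dist_eq_norm] using hf.dist_le_mul (a i) hai (b i) hbi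

theorem Filter.liminf_le_liminf_of_le_of_tendsto_sub {α : Type*} {f : Filter α} [f.NeBot]
    {a b c : α → ℝ} (hcb : ∀ᶠ i in f, c i ≤ b i) (hab : Tendsto (a - b) f (𝓝 0))
    (hc : IsBoundedUnder (· ≥ ·) f c) (hb : IsBoundedUnder (· ≤ ·) f b) :
    liminf c f ≤ liminf a f :=
  calc liminf c f ≤ liminf b f := liminf_le_liminf hcb hc hb.isCoboundedUnder_ge
    _ = liminf (a - b) f + liminf b f := by rw [hab.liminf_eq, zero_add]
    _ ≤ liminf (a - b + b) f :=
      le_liminf_add hab.isBoundedUnder_ge hab.isBoundedUnder_le (hc.mono_ge hcb)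
        hb.isCoboundedUnder_ge
    _ = liminf a f := by rw [sub_add_cancel]

theorem ConcaveOn.liminf_timeAverage_comp_le_liminf_map_timeAverage {E : Type*}
    [NormedAddCommGroup E] [NormedSpace ℝ E] {S : Set E} {φ : E → ℝ} {M : NNReal}
    (hconc : ConcaveOn ℝ S φ) (hlip : LipschitzOnWith M φ S) (hS : Bornology.IsBounded S)
    {x y : ℕ → E} (hx : ∀ τ, x τ ∈ S) (hy : ∀ τ, y τ ∈ S)
    (hxy : Tendsto (fun t => timeAverage x t - timeAverage y t) atTop (𝓝 0)) :
    liminf (timeAverage (φ ∘ x)) atTop ≤ liminf (fun t => φ (timeAverage y t)) atTop := by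
  have avg_mem {z : ℕ → E} (hz : ∀ τ, z τ ∈ S) : ∀ᶠ t in atTop, timeAverage z t ∈ S :=
    (eventually_ne_atTop 0).mono fun _ ht => hconc.1.timeAverage_mem hz ht
  obtain ⟨lo, hlo⟩ := (hlip.isBounded_image hS).bddBelow
  obtain ⟨hi, hhi⟩ := (hlip.isBounded_image hS).bddAbove
  have hφx (τ : ℕ) : (φ ∘ x) τ ∈ Set.Icc lo hi :=
    ⟨hlo ⟨_, hx τ, rfl⟩, hhi ⟨_, hx τ, rfl⟩⟩
  refine liminf_le_liminf_of_le_of_tendsto_sub (b := fun t => φ (timeAverage x t)) ?_ ?_ ?_ ?_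
  · exact (eventually_ne_atTop 0).mono fun _ ht => hconc.timeAverage_le_map_timeAverage hx ht
  · exact hlip.tendsto_sub_map (avg_mem hy) (avg_mem hx) (by simpa using hxy.neg)
  · exact ⟨lo, eventually_map.2 <| (eventually_ne_atTop 0).mono fun _ ht =>
      ((convex_Icc lo hi).timeAverage_mem hφx ht).1⟩
  · exact ⟨hi, eventually_map.2 <| (avg_mem hx).mono fun _ ht => hhi ⟨_, ht, rfl⟩⟩

theorem stmt_12_general (N : ℕ) (umax : Fin N → ℝ)
    (u γ : Fin N → ℕ → ℝ)
    (hu : ∀ i t, u i t ∈ Set.Icc (0 : ℝ) (umax i))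
    (hγ : ∀ i t, γ i t ∈ Set.Icc (0 : ℝ) (umax i))
    (φ : EuclideanSpace ℝ (Fin N) → ℝ) (M : NNReal)
    (hconc : ConcaveOn ℝ {v : EuclideanSpace ℝ (Fin N) | ∀ i, v i ∈ Set.Icc (0 : ℝ) (umax i)} φ)
    (hlip : LipschitzOnWith M φ {v : EuclideanSpace ℝ (Fin N) | ∀ i, v i ∈ Set.Icc (0 : ℝ) (umax i)})
    (hlim : ∀ i, Filter.Tendsto
      (fun t : ℕ => (1 / (t : ℝ)) * ∑ τ ∈ Finset.range t, γ i τ -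
        (1 / (t : ℝ)) * ∑ τ ∈ Finset.range t, u i τ)
      Filter.atTop (nhds 0)) :
    Filter.liminf
        (fun t : ℕ => φ ((WithLp.equiv 2 (Fin N → ℝ)).symm
          (fun i => (1 / (t : ℝ)) * ∑ τ ∈ Finset.range t, u i τ)))
        Filter.atTop ≥
      Filter.liminf
        (fun t : ℕ => (1 / (t : ℝ)) * ∑ τ ∈ Finset.range t,
          φ ((WithLp.equiv 2 (Fin N → ℝ)).symm (fun i => γ i τ)))
        Filter.atTop := by
  let toVec (w : Fin N → ℕ → ℝ) (τ : ℕ) : EuclideanSpace ℝ (Fin N) :=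
    (WithLp.equiv 2 (Fin N → ℝ)).symm fun i => w i τ
  have avg_eq (w : Fin N → ℕ → ℝ) (t : ℕ) :
      (WithLp.equiv 2 (Fin N → ℝ)).symm (fun i => (1 / (t : ℝ)) * ∑ τ ∈ range t, w i τ) =
        timeAverage (toVec w) t := by
    ext i
    simp [timeAverage, toVec]
  have hS : Bornology.IsBounded
      {v : EuclideanSpace ℝ (Fin N) | ∀ i, v i ∈ Set.Icc (0 : ℝ) (umax i)} :=
    ((PiLp.antilipschitzWith_ofLp 2 _).isBounded_preimage (Metric.isBounded_Icc 0 umax)).subset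
      fun v hv => ⟨fun i => (hv i).1, fun i => (hv i).2⟩
  have hxy : Tendsto (fun t => timeAverage (toVec γ) t - timeAverage (toVec u) t) atTop (𝓝 0) := by
    refine (((PiLp.continuous_toLp 2 _).tendsto 0).comp (tendsto_pi_nhds.2 hlim)).congr fun t => ?_
    rw [← avg_eq, ← avg_eq]
    ext i
    simp
  have key := hconc.liminf_timeAverage_comp_le_liminf_map_timeAverage hlip hS
    (x := toVec γ) (y := toVec u) (fun τ i => hγ i τ) (fun τ i => hu i τ) hxy
  simp only [ge_iff_le, avg_eq]
  convert key using 3 with t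
  simp [timeAverage, toVec]

theorem stmt_12 (N : ℕ) (umax : Fin N → ℝ) (humax : ∀ i, 0 < umax i)
    (u γ : Fin N → ℕ → ℝ)
    (hu : ∀ i t, u i t ∈ Set.Icc (0 : ℝ) (umax i))
    (hγ : ∀ i t, γ i t ∈ Set.Icc (0 : ℝ) (umax i))
    (φ : EuclideanSpace ℝ (Fin N) → ℝ) (M : NNReal)
    (hconc : ConcaveOn ℝ {v : EuclideanSpace ℝ (Fin N) | ∀ i, v i ∈ Set.Icc (0 : ℝ) (umax i)} φ)
    (hlip : LipschitzOnWith M φ {v : EuclideanSpace ℝ (Fin N) | ∀ i, v i ∈ Set.Icc (0 : ℝ) (umax i)})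
    (hlim : ∀ i, Filter.Tendsto
      (fun t : ℕ => (1 / (t : ℝ)) * ∑ τ ∈ Finset.range t, γ i τ -
        (1 / (t : ℝ)) * ∑ τ ∈ Finset.range t, u i τ)
      Filter.atTop (nhds 0)) :
    Filter.liminf
        (fun t : ℕ => φ ((WithLp.equiv 2 (Fin N → ℝ)).symm
          (fun i => (1 / (t : ℝ)) * ∑ τ ∈ Finset.range t, u i τ)))
        Filter.atTop ≥
      Filter.liminf
        (fun t : ℕ => (1 / (t : ℝ)) * ∑ τ ∈ Finset.range t,
          φ ((WithLp.equiv 2 (Fin N → ℝ)).symm (fun i => γ i τ)))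
        Filter.atTop :=
  stmt_12_general N umax u γ hu hγ φ M hconc hlip hlim
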